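/- arXiv:math/0511564 — 2 statements merged into one kernel-verified Lean document; each statement's English description precedes it below -/
import Mathlib

section
/- Let d ≥ 2 and let h ∈ C¹(ℝ^d, ℝ^d) be such that the Jacobian matrix h′(x) is nilpotent for every x in some neighborhood of 0, and h_d(x) = 0 whenever x_d = 0. Then there exist T > 0, an open neighborhood U of 0 in ℝ^d, and a C¹ function v : (−T,T)×U → ℝ^d such that on (−T,T)×U: ∂_t v + (v·∇_x)v = 0, div_x v = 0, v_d(t,x) = 0 whenever x_d = 0, and v(0,x) = h(x). -/
noncomputable section
open MeasureTheory Real Set Filter Topology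
open scoped ENNReal NNReal

namespace Paper

/-- Space vectors: dimension `d = n+1`. -/
abbrev Vec (n : ℕ) : Type := Fin (n+1) → ℝ

/-- Time-space points `(t, x)`. -/
abbrev Pt (n : ℕ) : Type := ℝ × Vec n

variable {n : ℕ} {E : Type*} [NormedAddCommGroup E] [NormedSpace ℝ E]

/-- Last (normal) coordinate `x_d`. -/
def nd (x : Vec n) : ℝ := x (Fin.last n)

/-- The half space `Ω = {x_d > 0}`. -/
def Omega (n : ℕ) : Set (Vec n) := {x | 0 < nd x}

/-- The time-space slab `(0,T) × Ω`. -/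
def slab (n : ℕ) (T : ℝ) : Set (Pt n) := Set.Ioo (0:ℝ) T ×ˢ Omega n

/-- The lateral boundary `(0,T) × Γ`, `Γ = {x_d = 0}`. -/
def bslab (n : ℕ) (T : ℝ) : Set (Pt n) := Set.Ioo (0:ℝ) T ×ˢ {x : Vec n | nd x = 0}

/-- Replace the last coordinate by `0` (projection to the boundary). -/
def setLast (x : Vec n) : Vec n := Function.update x (Fin.last n) 0

/-- Time derivative `∂_t f`. -/
def Dt (f : Pt n → E) (p : Pt n) : E := fderiv ℝ f p ((1 : ℝ), (0 : Vec n))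

/-- Spatial derivative `∂_{x_i} f`. -/
def Dx (i : Fin (n+1)) (f : Pt n → E) (p : Pt n) : E :=
  fderiv ℝ f p ((0 : ℝ), Pi.single i (1:ℝ))

/-- Particle derivative `X_v f = ∂_t f + v · ∇_x f`. -/
def Xd (v : Pt n → Vec n) (f : Pt n → E) (p : Pt n) : E :=
  Dt f p + ∑ i, v p i • Dx i f p

/-- Spatial divergence. -/
def divx (v : Pt n → Vec n) (p : Pt n) : ℝ := ∑ i, Dx i (fun q => v q i) p

/-- Derivatives of boundary-layer profiles `U(t,x,X)`. -/
def DtP (f : Pt n × ℝ → E) (q : Pt n × ℝ) : E :=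
  fderiv ℝ f q (((1 : ℝ), (0 : Vec n)), (0:ℝ))

def DxP (i : Fin (n+1)) (f : Pt n × ℝ → E) (q : Pt n × ℝ) : E :=
  fderiv ℝ f q (((0 : ℝ), Pi.single i (1:ℝ)), (0:ℝ))

def DXP (f : Pt n × ℝ → E) (q : Pt n × ℝ) : E :=
  fderiv ℝ f q (((0 : ℝ), (0 : Vec n)), (1:ℝ))

/-- The thermodynamic data: a smooth positive density `ρ(p,s)` and
`α(p,s) = ρ(p,s)⁻¹ ∂_p ρ(p,s) > 0`. -/
structure GasLaw (ρ α : ℝ × ℝ → ℝ) : Prop where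
  smooth : ContDiff ℝ (⊤ : ℕ∞) ρ
  pos : ∀ y, 0 < ρ y
  alpha_def : ∀ y, α y = (ρ y)⁻¹ * fderiv ℝ ρ y ((1:ℝ), (0:ℝ))
  alpha_pos : ∀ y, 0 < α y

/-- The Euler boundary value problem on `(0,T) × Ω` with wall boundary condition. -/
structure IsEulerSolution (ρ α : ℝ × ℝ → ℝ) (T : ℝ)
    (v : Pt n → Vec n) (pr s : Pt n → ℝ) : Prop where
  momentum : ∀ p ∈ slab n T, ∀ i : Fin (n+1),
    Xd v (fun q => v q i) p + (ρ (pr p, s p))⁻¹ * Dx i pr p = 0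
  pressure : ∀ p ∈ slab n T, Xd v pr p + (α (pr p, s p))⁻¹ * divx v p = 0
  entropy : ∀ p ∈ slab n T, Xd v s p = 0
  wall : ∀ p ∈ bslab n T, v p (Fin.last n) = 0

/-- `H^∞(S)`: (a smooth representative of) a function all of whose derivatives are in `L²(S)`. -/
def Hinf (S : Set (Pt n)) (f : Pt n → E) : Prop :=
  ContDiff ℝ (⊤ : ℕ∞) f ∧
  ∀ k : ℕ, MemLp (fun p => ‖iteratedFDeriv ℝ k f p‖) 2 (volume.restrict S)

/-- `H^∞` on a spatial domain. -/
def HinfX (S : Set (Vec n)) (f : Vec n → E) : Prop :=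
  ContDiff ℝ (⊤ : ℕ∞) f ∧
  ∀ k : ℕ, MemLp (fun x => ‖iteratedFDeriv ℝ k f x‖) 2 (volume.restrict S)

/-- The profile space `N(T) = H^∞((0,T)×Ω ; S(ℝ₊))`: all (t,x,X)-derivatives are rapidly
decreasing in `X ≥ 0`, with an `L²` bound in `(t,x)` on `(0,T)×Ω`. -/
def NProfile (T : ℝ) (f : Pt n × ℝ → E) : Prop :=
  ContDiff ℝ (⊤ : ℕ∞) f ∧
  ∀ k q : ℕ, ∃ g : Pt n → ℝ, MemLp g 2 (volume.restrict (slab n T)) ∧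
    ∀ p ∈ slab n T, ∀ X : ℝ, 0 ≤ X →
      (1+X)^q * ‖iteratedFDeriv ℝ k f (p, X)‖ ≤ g p

/-- The initial profile space `H^∞(Ω ; S(ℝ₊))`. -/
def NProfileInit (f : Vec n × ℝ → E) : Prop :=
  ContDiff ℝ (⊤ : ℕ∞) f ∧
  ∀ k q : ℕ, ∃ g : Vec n → ℝ, MemLp g 2 (volume.restrict (Omega n)) ∧
    ∀ x ∈ Omega n, ∀ X : ℝ, 0 ≤ X →
      (1+X)^q * ‖iteratedFDeriv ℝ k f (x, X)‖ ≤ g x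

/-- The cut-off `h` used to define the conormal field `Z_d = h(x_d) ∂_{x_d}`. -/
structure CutoffFun (h : ℝ → ℝ) : Prop where
  smooth : ContDiff ℝ (⊤ : ℕ∞) h
  bounded : ∃ C : ℝ, ∀ s, |h s| ≤ C
  eq_id : ∀ s : ℝ, 0 ≤ s → s ≤ 1 → h s = s
  eq_one : ∀ s : ℝ, 2 ≤ s → h s = 1
  ne_zero : ∀ s : ℝ, s ≠ 0 → h s ≠ 0

/-- The conormal vector fields `Z_0 = ∂_t`, `Z_i = ∂_{x_i}` (1 ≤ i ≤ d−1),
`Z_d = h(x_d) ∂_{x_d}`. -/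
def Zv (h : ℝ → ℝ) (i : Fin (n+2)) (f : Pt n → E) : Pt n → E :=
  if (i : ℕ) = 0 then Dt f
  else if (i : ℕ) = n + 1 then fun p => h (nd p.2) • Dx (Fin.last n) f p
  else Dx (⟨min ((i : ℕ) - 1) n, Nat.lt_succ_of_le (min_le_right _ _)⟩ : Fin (n+1)) f

/-- Iterated conormal derivative `Z^β` along a list of indices. -/
def Zlist (h : ℝ → ℝ) (l : List (Fin (n+2))) (f : Pt n → E) : Pt n → E :=
  l.foldr (fun i g => Zv h i g) f

/-- The weighted normal derivative `ε ∂_{x_d}`. -/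
def eDd (ε : ℝ) (f : Pt n → E) : Pt n → E := fun p => ε • Dx (Fin.last n) f p

/-- Iterated `(ε ∂_{x_d})^k`. -/
def eDdIter (ε : ℝ) (k : ℕ) (f : Pt n → E) : Pt n → E := (eDd ε)^[k] f

/-- Weighted `L²` norm `‖e^{-λ t} f‖_{L²((0,T)×Ω)}`. -/
def wL2 (lam T : ℝ) (f : Pt n → E) : ℝ≥0∞ :=
  eLpNorm (fun p => Real.exp (-lam * p.1) • f p) 2 (volume.restrict (slab n T))

/-- `L^∞((0,T)×Ω)` norm. -/
def Linf (T : ℝ) (f : Pt n → E) : ℝ≥0∞ :=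
  eLpNorm f ⊤ (volume.restrict (slab n T))

/-- The weighted conormal norm `|u|_{m,λ,T}`. -/
def conorm (h : ℝ → ℝ) (m : ℕ) (lam T : ℝ) (f : Pt n → E) : ℝ≥0∞ :=
  ∑ j ∈ Finset.range (m+1), ∑ β : Fin j → Fin (n+2),
    ENNReal.ofReal (lam ^ (m - j)) * wL2 lam T (Zlist h (List.ofFn β) f)

/-- The anisotropic norm `|u|^E_{ε,m,λ,T}`. -/
def Enorm (h : ℝ → ℝ) (ε : ℝ) (m : ℕ) (lam T : ℝ) (f : Pt n → E) : ℝ≥0∞ :=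
  ∑ k ∈ Finset.range (m+1), ∑ j ∈ Finset.range (m+1),
    if 2*k + j ≤ m then
      ∑ β : Fin j → Fin (n+2),
        ENNReal.ofReal (lam ^ (m - 2*k - j)) *
          wL2 lam T (eDdIter ε k (Zlist h (List.ofFn β) f))
    else 0

/-- The `L^∞` norm `‖u‖^*_{ε,T}`. -/
def starNorm (h : ℝ → ℝ) (ε T : ℝ) (f : Pt n → E) : ℝ≥0∞ :=
  (∑ j ∈ Finset.range 3, ∑ β : Fin j → Fin (n+2), Linf T (Zlist h (List.ofFn β) f))
  + ∑ j ∈ Finset.range 2, ∑ β : Fin j → Fin (n+2), Linf T (Zlist h (List.ofFn β) (eDd ε f))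

end Paper
namespace Paper


section Aux

open Finset in
private lemma aux_neumann {R : Type*} [CommRing R] {A : Type*} [Ring A] [Algebra R A]
    (B S : A) (t : R) (m : ℕ) (hB : B ^ m = 0)
    (hS : (1 + t • B) * S = 1) : IsNilpotent (B * S) := by
  set P : A := ∑ j ∈ Finset.range m, (-t)^j • B^j with hP
  have hneg : ∀ j : ℕ, (-t)^(j+1) = -(t * (-t)^j) := fun j => by ring
  have hPr : P * (1 + t • B) = 1 := by
    have key' : ∀ j : ℕ, ((-t)^j • B^j) * (1 + t • B) = (-t)^j • B^j - (-t)^(j+1) • B^(j+1) := by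
      intro j
      rw [mul_add, mul_one, smul_mul_assoc, mul_smul_comm, smul_smul, mul_comm ((-t)^j) t,
        hneg j, neg_smul, sub_neg_eq_add, pow_succ]
    rw [hP, Finset.sum_mul]
    simp_rw [key']
    rw [Finset.sum_range_sub' (fun j => (-t)^j • B^j) m]
    simp [hB]
  have hSP : S = P := by
    calc S = 1 * S := (one_mul S).symm
    _ = (P * (1 + t • B)) * S := by rw [hPr]
    _ = P * ((1 + t • B) * S) := by rw [mul_assoc]
    _ = P := by rw [hS, mul_one]
  have hcomm : Commute B P := by
    apply Commute.sum_right
    intro j _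
    exact ((Commute.refl B).pow_right j).smul_right _
  refine ⟨m, ?_⟩
  rw [hSP, hcomm.mul_pow, hB, zero_mul]

private lemma aux_trace {d : ℕ} (A : Module.End ℝ (Fin d → ℝ)) (hA : IsNilpotent A) :
    ∑ i, A (Pi.single i 1) i = 0 := by
  have h0 : LinearMap.trace ℝ (Fin d → ℝ) A = 0 :=
    (LinearMap.isNilpotent_trace_of_isNilpotent hA).eq_zero
  rw [LinearMap.trace_eq_matrix_trace ℝ (Pi.basisFun ℝ (Fin d)) A] at h0
  rw [← h0, Matrix.trace]
  apply Finset.sum_congr rfl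
  intro i _
  simp [Matrix.diag, LinearMap.toMatrix_apply]

variable {n : ℕ}

/-- The characteristic flow map `F(t,x) = (t, x + t h(x))`. -/
private def FF (h : Vec n → Vec n) : Pt n → Pt n := fun p => (p.1, p.2 + p.1 • h p.2)

private def LL (h : Vec n → Vec n) (p : Pt n) : Pt n →L[ℝ] Pt n :=
  (ContinuousLinearMap.fst ℝ ℝ (Vec n)).prod
    ((ContinuousLinearMap.snd ℝ ℝ (Vec n)) +
      (p.1 • ((fderiv ℝ h p.2).comp (ContinuousLinearMap.snd ℝ ℝ (Vec n))) +
        (ContinuousLinearMap.fst ℝ ℝ (Vec n)).smulRight (h p.2)))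

private lemma FF_contDiff {h : Vec n → Vec n} (hh : ContDiff ℝ 1 h) : ContDiff ℝ 1 (FF h) :=
  contDiff_fst.prodMk (contDiff_snd.add (contDiff_fst.smul (hh.comp contDiff_snd)))

private lemma FF_hasFDerivAt {h : Vec n → Vec n} (hh : ContDiff ℝ 1 h) (p : Pt n) :
    HasFDerivAt (FF h) (LL h p) p := by
  apply HasFDerivAt.prodMk (hasFDerivAt_fst)
  exact (hasFDerivAt_snd).add
    ((hasFDerivAt_fst (p := p)).smul
      (((hh.differentiable one_ne_zero) p.2).hasFDerivAt.comp p hasFDerivAt_snd))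

private lemma LL_apply (h : Vec n → Vec n) (p w : Pt n) :
    LL h p w = (w.1, w.2 + (p.1 • (fderiv ℝ h p.2 w.2) + w.1 • h p.2)) := by
  simp [LL]

private def shear (h : Vec n → Vec n) : Pt n ≃L[ℝ] Pt n :=
  LinearEquiv.toContinuousLinearEquiv <|
  LinearEquiv.ofLinear
    ((LinearMap.fst ℝ ℝ (Vec n)).prod
      ((LinearMap.snd ℝ ℝ (Vec n)) + (LinearMap.fst ℝ ℝ (Vec n)).smulRight (h 0)))
    ((LinearMap.fst ℝ ℝ (Vec n)).prod
      ((LinearMap.snd ℝ ℝ (Vec n)) - (LinearMap.fst ℝ ℝ (Vec n)).smulRight (h 0)))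
    (by ext w <;> simp) (by ext w <;> simp)

private lemma shear_coe (h : Vec n → Vec n) :
    ((shear h) : Pt n →L[ℝ] Pt n) = LL h ((0:ℝ), (0:Vec n)) := by
  ext w <;> simp [shear, LL]

end Aux

/-- local C¹ solutions of the multidimensional Burgers equation which are
divergence free, with wall boundary condition (Theorem `tt` of the paper). `d = n+1 ≥ 2`. -/
theorem statement_1 {n : ℕ} (hn : 1 ≤ n)
    (h : Vec n → Vec n) (hh : ContDiff ℝ 1 h)
    (hnil : ∃ U ∈ 𝓝 (0 : Vec n), ∀ x ∈ U, IsNilpotent (fderiv ℝ h x))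
    (hbd : ∀ x : Vec n, nd x = 0 → h x (Fin.last n) = 0) :
    ∃ T : ℝ, 0 < T ∧ ∃ U : Set (Vec n), IsOpen U ∧ (0:Vec n) ∈ U ∧
      ∃ v : Pt n → Vec n,
        ContDiffOn ℝ 1 v (Set.Ioo (-T) T ×ˢ U) ∧
        (∀ p ∈ Set.Ioo (-T) T ×ˢ U,
          (∀ i : Fin (n+1),
            Dt (fun q => v q i) p + ∑ j, v p j * Dx j (fun q => v q i) p = 0) ∧
          divx v p = 0) ∧
        (∀ p ∈ Set.Ioo (-T) T ×ˢ U, nd p.2 = 0 → v p (Fin.last n) = 0) ∧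
        (∀ x ∈ U, v (0, x) = h x) := by
  classical
  obtain ⟨Un, hUnmem, hUnnil⟩ := hnil
  obtain ⟨K, tset, htset, hlip⟩ :=
    (hh.contDiffAt (x := (0:Vec n))).exists_lipschitzOnWith
  obtain ⟨r, hr0, hrball⟩ := Metric.mem_nhds_iff.mp htset
  set z : Pt n := ((0:ℝ), (0:Vec n)) with hzdef
  have hFc : ContDiffAt ℝ 1 (FF h) z := (FF_contDiff hh).contDiffAt
  have hF0 : FF h z = z := by simp [FF, hzdef]
  have hFd : HasFDerivAt (FF h) ((shear h : Pt n ≃L[ℝ] Pt n) : Pt n →L[ℝ] Pt n) z := by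
    rw [shear_coe]; exact FF_hasFDerivAt hh z
  have hstrict : HasStrictFDerivAt (FF h) ((shear h : Pt n ≃L[ℝ] Pt n) : Pt n →L[ℝ] Pt n) z :=
    hFc.hasStrictFDerivAt' hFd one_ne_zero
  set g : Pt n → Pt n := hstrict.localInverse (FF h) (shear h) z with hgdef
  have hleft : ∀ᶠ p in 𝓝 z, g (FF h p) = p := hstrict.eventually_left_inverse
  have hright : ∀ᶠ q in 𝓝 z, FF h (g q) = q := by
    have := hstrict.eventually_right_inverse; rwa [hF0] at this
  have hgz : g z = z := by
    have := hstrict.localInverse_apply_image; rwa [hF0] at this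
  have hgC : ContDiffAt ℝ 1 g z := by
    have := hFc.to_localInverse hFd one_ne_zero; rwa [hF0] at this
  obtain ⟨Wg0, hWg0, hgOn0⟩ := hgC.contDiffOn le_rfl (by simp)
  set Wg : Set (Pt n) := interior Wg0 with hWgdef
  have hWgopen : IsOpen Wg := isOpen_interior
  have hzWg : z ∈ Wg := mem_interior_iff_mem_nhds.2 hWg0
  have hgOn : ContDiffOn ℝ 1 g Wg := hgOn0.mono interior_subset
  set OL : Set (Pt n) := interior {p : Pt n | g (FF h p) = p} with hOLdef
  have hOLopen : IsOpen OL := isOpen_interior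
  have hzOL : z ∈ OL := mem_interior_iff_mem_nhds.2 hleft
  have hOLsub : ∀ p' : Pt n, p' ∈ OL → g (FF h p') = p' := by
    intro p' hp'
    have : p' ∈ {p : Pt n | g (FF h p) = p} := interior_subset hp'
    exact this
  set OR : Set (Pt n) := interior {q : Pt n | FF h (g q) = q} with hORdef
  have hORopen : IsOpen OR := isOpen_interior
  have hzOR : z ∈ OR := mem_interior_iff_mem_nhds.2 hright
  have hORsub : ∀ q' : Pt n, q' ∈ OR → FF h (g q') = q' := by
    intro q' hq'
    have : q' ∈ {q : Pt n | FF h (g q) = q} := interior_subset hq'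
    exact this
  set Nn : Set (Vec n) := interior Un with hNndef
  have h0Nn : (0:Vec n) ∈ Nn := mem_interior_iff_mem_nhds.2 hUnmem
  set Ssrc : Set (Pt n) := OL ∩ (Set.univ ×ˢ (Nn ∩ Metric.ball (0:Vec n) r)) with hSsrcdef
  have hSsrcopen : IsOpen Ssrc :=
    hOLopen.inter (isOpen_univ.prod (isOpen_interior.inter Metric.isOpen_ball))
  have hzS : z ∈ Ssrc := ⟨hzOL, ⟨Set.mem_univ _, h0Nn, Metric.mem_ball_self hr0⟩⟩
  set V : Set (Pt n) := (Wg ∩ OR) ∩ (g ⁻¹' Ssrc) with hVdef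
  have hVopen : IsOpen V :=
    ContinuousOn.isOpen_inter_preimage (hgOn.continuousOn.mono Set.inter_subset_left)
      (hWgopen.inter hORopen) hSsrcopen
  have hzV : z ∈ V := ⟨⟨hzWg, hzOR⟩, by rw [Set.mem_preimage, hgz]; exact hzS⟩
  obtain ⟨ε, hε0, hεsub⟩ := Metric.isOpen_iff.mp (hVopen.inter hOLopen) z ⟨hzV, hzOL⟩
  set T : ℝ := min (ε/2) (1/((K:ℝ)+1)) with hTdef
  have hT0 : 0 < T := lt_min (by positivity) (by positivity)
  set U : Set (Vec n) := Metric.ball (0:Vec n) (ε/2) with hUdef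
  set v : Pt n → Vec n := fun q => h ((g q).2) with hvdef
  -- the slab is contained in the good ball
  have hsub : Set.Ioo (-T) T ×ˢ U ⊆ Metric.ball z ε := by
    rintro ⟨t, y⟩ ⟨ht, hy⟩
    have h1 : |t| < T := abs_lt.2 ⟨ht.1, ht.2⟩
    have h2 : dist y (0:Vec n) < ε/2 := hy
    have hTle : T ≤ ε/2 := min_le_left _ _
    rw [Metric.mem_ball, Prod.dist_eq]
    have h3 : dist t (0:ℝ) < ε/2 := by rw [Real.dist_eq, sub_zero]; linarith
    exact max_lt (by linarith) (by linarith)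
  have hmem : ∀ q ∈ Metric.ball z ε,
      q ∈ Wg ∧ FF h (g q) = q ∧ g q ∈ OL ∧ (g q).2 ∈ Un ∧ (g q).2 ∈ Metric.ball (0:Vec n) r
        ∧ q ∈ OR := by
    intro q hq
    obtain ⟨⟨⟨h1, h2⟩, h3⟩, _⟩ := hεsub hq
    have h4 : g q ∈ Ssrc := h3
    exact ⟨h1, hORsub q h2, h4.1, interior_subset h4.2.2.1, h4.2.2.2, h2⟩
  have hvOn : ContDiffOn ℝ 1 v Wg := hh.comp_contDiffOn (contDiff_snd.comp_contDiffOn hgOn)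
  refine ⟨T, hT0, U, Metric.isOpen_ball, Metric.mem_ball_self (by positivity), v, ?_, ?_, ?_, ?_⟩
  · -- regularity
    exact hvOn.mono (fun q hq => (hmem q (hsub hq)).1)
  · -- PDE and divergence
    intro q hq
    obtain ⟨hqWg, hFgq, hgqOL, hxUn, hxball, hqOR⟩ := hmem q (hsub hq)
    set x : Vec n := (g q).2 with hxdef
    set t : ℝ := q.1 with htdef
    have hfst1 : (g q).1 = t := by
      have := congrArg Prod.fst hFgq; simpa [FF] using this
    have hgq : g q = (t, x) := by
      rw [← hfst1]
    have hvq : v q = h x := rfl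
    have hvAt : ContDiffAt ℝ 1 v q := hvOn.contDiffAt (hWgopen.mem_nhds hqWg)
    have hdv : DifferentiableAt ℝ v q := hvAt.differentiableAt one_ne_zero
    have hdg : DifferentiableAt ℝ g q :=
      (hgOn.contDiffAt (hWgopen.mem_nhds hqWg)).differentiableAt one_ne_zero
    -- key vector identity : fderiv v q (1, v q) = 0
    have hkey : fderiv ℝ v q (((1:ℝ), v q) : Pt n) = 0 := by
      have hcO : ∀ᶠ s in 𝓝 t, ((s, x) : Pt n) ∈ OL := by
        have hc : ContinuousAt (fun s : ℝ => ((s, x) : Pt n)) t :=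
          (continuous_id.prodMk continuous_const).continuousAt
        exact hc.eventually_mem (hOLopen.mem_nhds (hgq ▸ hgqOL))
      have hvc : ∀ᶠ s in 𝓝 t, v (FF h (s, x)) = h x := by
        filter_upwards [hcO] with s hs
        have h5 : g (FF h (s, x)) = (s, x) := hOLsub _ hs
        show h ((g (FF h (s, x))).2) = h x
        rw [h5]
      have hcurve : HasDerivAt (fun s : ℝ => FF h (s, x)) ((((1:ℝ), h x)) : Pt n) t := by
        have h2 : HasDerivAt (fun s : ℝ => x + s • h x) (h x) t := by
          simpa using ((hasDerivAt_id t).smul_const (h x)).const_add x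
        exact (hasDerivAt_id t).prodMk h2
      have hq_eq : FF h (t, x) = q := by rw [← hgq]; exact hFgq
      have hvF : HasFDerivAt v (fderiv ℝ v q) (FF h (t, x)) := by
        rw [hq_eq]; exact hdv.hasFDerivAt
      have hcomp : HasDerivAt (fun s : ℝ => v (FF h (s, x)))
          (fderiv ℝ v q (((1:ℝ), h x) : Pt n)) t := by
          have := hvF.comp_hasDerivAt t hcurve; exact this
      have hconst : HasDerivAt (fun s : ℝ => v (FF h (s, x))) 0 t :=
        (hasDerivAt_const t (h x)).congr_of_eventuallyEq hvc
      have h6 := hcomp.unique hconst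
      rw [hvq]; exact h6
    -- component-wise fderiv
    have hfig : ∀ (i : Fin (n+1)) (w : Pt n),
        fderiv ℝ (fun q' : Pt n => v q' i) q w = fderiv ℝ v q w i := by
      intro i w
      have hp0 := HasFDerivAt.comp q
        ((ContinuousLinearMap.proj (R := ℝ) (φ := fun _ : Fin (n+1) => ℝ) i).hasFDerivAt
          (x := v q)) hdv.hasFDerivAt
      have hp : HasFDerivAt (fun q' : Pt n => v q' i)
          ((ContinuousLinearMap.proj (R := ℝ) (φ := fun _ : Fin (n+1) => ℝ) i).comp
            (fderiv ℝ v q)) q := hp0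
      rw [hp.fderiv]
      rfl
    constructor
    · -- Burgers equation
      intro i
      have hrep : ∑ j, v q j • (Pi.single j (1:ℝ) : Vec n) = v q := by
        have h7 : ∀ j : Fin (n+1), v q j • (Pi.single j (1:ℝ) : Vec n)
            = Pi.single j (v q j) := by
          intro j
          rw [← Pi.single_smul, smul_eq_mul, mul_one]
        rw [Finset.sum_congr rfl (fun j _ => h7 j), Finset.univ_sum_single]
      have hDt : Dt (fun q' : Pt n => v q' i) q
          = fderiv ℝ v q (((1:ℝ), (0:Vec n)) : Pt n) i := hfig i _
      have hDx : ∀ j, Dx j (fun q' : Pt n => v q' i) q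
          = fderiv ℝ v q (((0:ℝ), (Pi.single j (1:ℝ) : Vec n)) : Pt n) i := fun j => hfig i _
      rw [hDt, Finset.sum_congr rfl (fun j _ => by rw [hDx j])]
      have hsum : ∑ j, v q j * fderiv ℝ v q (((0:ℝ), (Pi.single j (1:ℝ) : Vec n)) : Pt n) i
          = fderiv ℝ v q (((0:ℝ), v q) : Pt n) i := by
        have hw : (((0:ℝ), v q) : Pt n)
            = ∑ j, v q j • ((((0:ℝ), (Pi.single j (1:ℝ) : Vec n))) : Pt n) := by
          rw [Prod.ext_iff]
          constructor
          · simp [Prod.fst_sum]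
          · simp only [Prod.snd_sum, Prod.smul_mk]
            exact hrep.symm
        rw [hw, map_sum, Finset.sum_apply]
        apply Finset.sum_congr rfl
        intro j _
        rw [_root_.map_smul]
        rfl
      rw [hsum]
      have h8 : (((1:ℝ), (0:Vec n)) : Pt n) + (((0:ℝ), v q) : Pt n) = ((1:ℝ), v q) := by
        simp [Prod.ext_iff]
      have h9 : fderiv ℝ v q (((1:ℝ), (0:Vec n)) : Pt n) i
            + fderiv ℝ v q (((0:ℝ), v q) : Pt n) i
          = fderiv ℝ v q (((1:ℝ), v q) : Pt n) i := by
        rw [← h8, map_add]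
        simp
      rw [h9, hkey]
      simp
    · -- divergence free
      have hdF : HasFDerivAt (FF h) (LL h (g q)) (g q) := FF_hasFDerivAt hh (g q)
      have hchain : (LL h (g q)).comp (fderiv ℝ g q) = ContinuousLinearMap.id ℝ (Pt n) := by
        have h1 : HasFDerivAt (FF h ∘ g) ((LL h (g q)).comp (fderiv ℝ g q)) q :=
          hdF.comp q hdg.hasFDerivAt
        have h2 : (FF h ∘ g) =ᶠ[𝓝 q] (id : Pt n → Pt n) :=
          Filter.eventuallyEq_of_mem (hORopen.mem_nhds hqOR) (fun q' hq' => hORsub q' hq')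
        have h3 : HasFDerivAt (FF h ∘ g) (ContinuousLinearMap.id ℝ (Pt n)) q :=
          (hasFDerivAt_id q).congr_of_eventuallyEq h2
        exact h1.unique h3
      set Bc : Vec n →L[ℝ] Vec n := fderiv ℝ h x with hBcdef
      set Sc : Vec n →L[ℝ] Vec n := (ContinuousLinearMap.snd ℝ ℝ (Vec n)).comp
        ((fderiv ℝ g q).comp (ContinuousLinearMap.inr ℝ ℝ (Vec n))) with hScdef
      obtain ⟨m, hm⟩ := hUnnil x hxUn
      have hid : ∀ ξ : Vec n, LL h (g q) (fderiv ℝ g q (((0:ℝ), ξ) : Pt n)) = ((0:ℝ), ξ) := by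
        intro ξ
        have := DFunLike.congr_fun hchain (((0:ℝ), ξ) : Pt n)
        simpa using this
      have hfst0 : ∀ ξ : Vec n, (fderiv ℝ g q (((0:ℝ), ξ) : Pt n)).1 = 0 := by
        intro ξ
        have h2 := congrArg Prod.fst (hid ξ)
        rw [LL_apply] at h2
        simpa using h2
      have hsc : ∀ ξ : Vec n, Sc ξ = (fderiv ℝ g q (((0:ℝ), ξ) : Pt n)).2 := fun ξ => rfl
      have hsnd : ∀ ξ : Vec n, Sc ξ + t • Bc (Sc ξ) = ξ := by
        intro ξ
        have h2 := congrArg Prod.snd (hid ξ)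
        rw [LL_apply] at h2
        rw [hsc ξ]
        rw [hfst1] at h2
        simpa [hfst0 ξ] using h2
      have honeC : ((1 : Vec n →L[ℝ] Vec n) + t • Bc) * Sc = 1 := by
        refine ContinuousLinearMap.ext fun ξ => ?_
        have := hsnd ξ
        simpa [ContinuousLinearMap.mul_apply] using this
      have hnilC : IsNilpotent (Bc * Sc) := aux_neumann Bc Sc t m hm honeC
      have hnilL : IsNilpotent
          ((ContinuousLinearMap.toLinearMapRingHom (Bc * Sc)) : Module.End ℝ (Vec n)) :=
        hnilC.map _
      have htr := aux_trace _ hnilL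
      have hDvw : ∀ w : Pt n, fderiv ℝ v q w = Bc ((fderiv ℝ g q w).2) := by
        intro w
        have h1 : HasFDerivAt (fun p' : Pt n => h p'.2)
            (Bc.comp (ContinuousLinearMap.snd ℝ ℝ (Vec n))) (g q) :=
          HasFDerivAt.comp (g q) (((hh.differentiable one_ne_zero) x).hasFDerivAt) hasFDerivAt_snd
        have hcv : HasFDerivAt v
            ((Bc.comp (ContinuousLinearMap.snd ℝ ℝ (Vec n))).comp (fderiv ℝ g q)) q :=
          h1.comp q hdg.hasFDerivAt
        rw [hcv.fderiv]
        rfl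
      have hdiv : divx v q = ∑ i, ((ContinuousLinearMap.toLinearMapRingHom (Bc * Sc))
          : Module.End ℝ (Vec n)) (Pi.single i 1) i := by
        apply Finset.sum_congr rfl
        intro i _
        have h1 : Dx i (fun q' : Pt n => v q' i) q
            = fderiv ℝ v q (((0:ℝ), (Pi.single i (1:ℝ) : Vec n)) : Pt n) i := hfig i _
        rw [h1, hDvw]
        rfl
      rw [hdiv, htr]
  · -- wall condition
    intro q hq hq0
    obtain ⟨hqWg, hFgq, hgqOL, hxUn, hxball, hqOR⟩ := hmem q (hsub hq)
    set x : Vec n := (g q).2 with hxdef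
    set t : ℝ := q.1 with htdef
    have hfst1 : (g q).1 = t := by
      have := congrArg Prod.fst hFgq; simpa [FF] using this
    have hsnd : x + (g q).1 • h x = q.2 := by
      have := congrArg Prod.snd hFgq; simpa [FF] using this
    rw [hfst1] at hsnd
    have hcomp : x (Fin.last n) + t * h x (Fin.last n) = 0 := by
      have h1 := congrFun hsnd (Fin.last n)
      have h2 : q.2 (Fin.last n) = 0 := hq0
      simpa [h2] using h1
    set y : Vec n := Function.update x (Fin.last n) 0 with hydef
    have hxnorm : ‖x‖ < r := by rwa [Metric.mem_ball, dist_zero_right] at hxball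
    have hynorm : ‖y‖ ≤ ‖x‖ := by
      apply (pi_norm_le_iff_of_nonneg (norm_nonneg x)).2
      intro i
      by_cases hi : i = Fin.last n
      · subst hi; simp [hydef]
      · rw [hydef, Function.update_of_ne hi]
        exact norm_le_pi_norm x i
    have hxt : x ∈ tset := hrball (by rwa [Metric.mem_ball, dist_zero_right])
    have hyt : y ∈ tset := hrball (by rw [Metric.mem_ball, dist_zero_right]; linarith)
    have hy0 : h y (Fin.last n) = 0 := hbd y (by simp [nd, hydef])
    have hxy : dist x y = |x (Fin.last n)| := by
      rw [dist_eq_norm]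
      have hxyv : x - y = Pi.single (Fin.last n) (x (Fin.last n)) := by
        funext k
        by_cases hk : k = Fin.last n
        · subst hk; simp [hydef]
        · simp [hydef, Function.update_of_ne hk, Pi.single_eq_of_ne hk]
      rw [hxyv, Pi.norm_single, Real.norm_eq_abs]
    have hhb : |h x (Fin.last n)| ≤ (K:ℝ) * |x (Fin.last n)| := by
      have h1 : dist (h x) (h y) ≤ (K:ℝ) * dist x y := hlip.dist_le_mul x hxt y hyt
      have h2 : |h x (Fin.last n) - h y (Fin.last n)| ≤ dist (h x) (h y) := by
        rw [dist_eq_norm]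
        have := norm_le_pi_norm (h x - h y) (Fin.last n)
        simpa [Real.norm_eq_abs] using this
      rw [hy0, sub_zero] at h2
      calc |h x (Fin.last n)| ≤ dist (h x) (h y) := h2
      _ ≤ (K:ℝ) * dist x y := h1
      _ = (K:ℝ) * |x (Fin.last n)| := by rw [hxy]
    have htT : |t| < T := abs_lt.2 ⟨hq.1.1, hq.1.2⟩
    have hTK : T ≤ 1/((K:ℝ)+1) := min_le_right _ _
    have hK0 : (0:ℝ) ≤ K := K.coe_nonneg
    have hK1 : (0:ℝ) < (K:ℝ) + 1 := by linarith
    have htK : |t| * (K:ℝ) < 1 := by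
      have h1 : |t| * (K:ℝ) ≤ (1/((K:ℝ)+1)) * K :=
        mul_le_mul_of_nonneg_right (le_of_lt (lt_of_lt_of_le htT hTK)) hK0
      have h2 : (1/((K:ℝ)+1)) * (K:ℝ) < 1 := by
        rw [div_mul_eq_mul_div, one_mul, div_lt_one hK1]; linarith
      linarith
    have hx0 : x (Fin.last n) = 0 := by
      by_contra hne
      have h1 : |x (Fin.last n)| = |t| * |h x (Fin.last n)| := by
        rw [show x (Fin.last n) = -(t * h x (Fin.last n)) from by linarith, abs_neg, abs_mul]
      have h3 : |x (Fin.last n)| ≤ (|t| * (K:ℝ)) * |x (Fin.last n)| := by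
        calc |x (Fin.last n)| = |t| * |h x (Fin.last n)| := h1
        _ ≤ |t| * ((K:ℝ) * |x (Fin.last n)|) := mul_le_mul_of_nonneg_left hhb (abs_nonneg t)
        _ = (|t| * (K:ℝ)) * |x (Fin.last n)| := by ring
      have h4 : (0:ℝ) < (1 - |t| * (K:ℝ)) * |x (Fin.last n)| :=
        mul_pos (by linarith) (abs_pos.2 hne)
      nlinarith
    have hlast : h x (Fin.last n) = 0 := hbd x hx0
    show v q (Fin.last n) = 0
    exact hlast
  · -- initial condition
    intro x hx
    have hball : (((0:ℝ), x) : Pt n) ∈ Metric.ball z ε := by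
      rw [Metric.mem_ball, Prod.dist_eq]
      have h2 : dist x (0:Vec n) < ε/2 := hx
      have h3 : dist (0:ℝ) (0:ℝ) = 0 := by simp
      exact max_lt (by rw [h3]; positivity) (by linarith)
    have hOL : (((0:ℝ), x) : Pt n) ∈ OL := (hεsub hball).2
    have hFx : FF h (((0:ℝ), x) : Pt n) = ((0:ℝ), x) := by simp [FF]
    have hgx : g (((0:ℝ), x) : Pt n) = ((0:ℝ), x) := by
      have := hOLsub _ hOL
      rwa [hFx] at this
    show h ((g (((0:ℝ), x) : Pt n)).2) = h x
    rw [hgx]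

end Paper
end
end

section
/- Let T0 > 0 and let u⁰ = (v⁰, p⁰, s⁰) ∈ H^∞((0,T0)×Ω) be a solution of the Euler boundary value problem on (0,T0)×Ω that satisfies X_{v⁰} v⁰ = 0, div_x v⁰ = 0 and ∇_{t,x} p⁰ = 0 on all of (0,T0)×Ω. Let S̃⁰ ∈ N(T0) solve the transport equation (∂_t + v⁰·∇_x + (v⁰_d/x_d)·X·∂_X) S̃⁰ = 0 on (0,T0)×Ω×ℝ₊ (the function v⁰_d/x_d extends to a C^∞ function since v⁰_d vanishes on Γ). Then for every ε ∈ (0,1], the function u^ε := (v⁰, p⁰, s^ε) with s^ε(t,x) := s⁰(t,x) + S̃⁰(t,x,x_d/ε) is again a solution of the Euler boundary value problem on (0,T0)×Ω. -/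
noncomputable section
open MeasureTheory Real Set Filter Topology
open scoped ENNReal NNReal

namespace Paper

/-- if the ground state satisfies `X_{v⁰} v⁰ = 0`, `div v⁰ = 0`, `∇_{t,x} p⁰ = 0`
on the whole slab and `S̃⁰` solves the layer transport equation, then
`(v⁰, p⁰, s⁰ + S̃⁰(·,x_d/ε))` is an exact Euler solution for every `ε ∈ (0,1]`. `d = n+1 ≥ 2`. -/
theorem statement_3 {n : ℕ} (hn : 1 ≤ n)
    {ρ α : ℝ × ℝ → ℝ} (hgas : GasLaw ρ α)
    {T0 : ℝ} (hT0 : 0 < T0)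
    {v0 : Pt n → Vec n} {p0 s0 : Pt n → ℝ}
    (hv0 : Hinf (slab n T0) v0) (hp0 : Hinf (slab n T0) p0) (hs0 : Hinf (slab n T0) s0)
    (hsol : IsEulerSolution ρ α T0 v0 p0 s0)
    (hburgers : ∀ p ∈ slab n T0, ∀ i : Fin (n+1), Xd v0 (fun q => v0 q i) p = 0)
    (hdiv : ∀ p ∈ slab n T0, divx v0 p = 0)
    (hgradp : ∀ p ∈ slab n T0, Dt p0 p = 0 ∧ ∀ i, Dx i p0 p = 0)
    -- `w` is the C^∞ extension of `v⁰_d / x_d`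
    {w : Pt n → ℝ} (hw : ContDiff ℝ (⊤ : ℕ∞) w)
    (hwdef : ∀ p ∈ slab n T0, v0 p (Fin.last n) = nd p.2 * w p)
    {S0 : Pt n × ℝ → ℝ} (hS0 : NProfile T0 S0)
    (htrans : ∀ p ∈ slab n T0, ∀ X : ℝ, 0 ≤ X →
      DtP S0 (p, X) + (∑ i, v0 p i * DxP i S0 (p, X)) + w p * X * DXP S0 (p, X) = 0) :
    ∀ ε ∈ Set.Ioc (0:ℝ) 1,
      IsEulerSolution ρ α T0 v0 p0 (fun p => s0 p + S0 (p, nd p.2 / ε)) := by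
  intro ε hε
  obtain ⟨hε0, hε1⟩ := hε
  -- the linear map `q ↦ (q, nd q.2 / ε)`
  set L : (ℝ × Vec n) →L[ℝ] (ℝ × Vec n) × ℝ :=
    (ContinuousLinearMap.id ℝ (ℝ × Vec n)).prod
      (ε⁻¹ • ((ContinuousLinearMap.proj (Fin.last n)).comp
        (ContinuousLinearMap.snd ℝ ℝ (Vec n)))) with hLdef
  have hLval : ∀ q : Pt n, L q = (q, nd q.2 / ε) := by
    intro q
    simp [hLdef, nd, div_eq_inv_mul, smul_eq_mul]
  have hS0diff : Differentiable ℝ S0 := hS0.1.differentiable (by simp)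
  set F : Pt n → ℝ := S0 ∘ L with hFdef
  have hFdiff : Differentiable ℝ F := hS0diff.comp L.differentiable
  have hfdF : ∀ p : Pt n, fderiv ℝ F p = (fderiv ℝ S0 (L p)).comp L := by
    intro p
    have h := fderiv_comp p (hS0diff (L p)) L.differentiableAt
    rwa [L.fderiv] at h
  have hFeq : (fun p : Pt n => s0 p + S0 (p, nd p.2 / ε)) = fun p => s0 p + F p := by
    funext q
    rw [hFdef]
    simp [Function.comp, hLval]
  -- the key cancellation: `X_{v0} F = 0` on the slab
  have key : ∀ p ∈ slab n T0, Xd v0 F p = 0 := by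
    intro p hp
    have hLp : L p = (p, nd p.2 / ε) := hLval p
    have hnd : 0 < nd p.2 := hp.2
    have hX0 : (0:ℝ) ≤ nd p.2 / ε := le_of_lt (div_pos hnd hε0)
    have htr := htrans p hp (nd p.2 / ε) hX0
    have e1 : Dt F p = DtP S0 (p, nd p.2 / ε) := by
      rw [Dt, hfdF, DtP, hLp, ContinuousLinearMap.comp_apply]
      congr 1
      simp [hLdef, Prod.ext_iff, nd]
    have e2 : ∀ i : Fin (n+1), Dx i F p
        = DxP i S0 (p, nd p.2 / ε)
          + (if i = Fin.last n then ε⁻¹ else 0) * DXP S0 (p, nd p.2 / ε) := by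
      intro i
      have hLi : L ((0:ℝ), Pi.single i (1:ℝ)) =
          (((0:ℝ), Pi.single i (1:ℝ)), (0:ℝ)) + (if i = Fin.last n then ε⁻¹ else 0) •
            (((0:ℝ), (0:Vec n)), (1:ℝ)) := by
        by_cases h : i = Fin.last n
        · simp [hLdef, h, Prod.ext_iff, Pi.single_apply]
        · simp [hLdef, h, Prod.ext_iff, Pi.single_apply, Ne.symm h]
      rw [Dx, hfdF, ContinuousLinearMap.comp_apply, hLi, map_add, (fderiv ℝ S0 (L p)).map_smul]
      rw [DxP, DXP, hLp]
      simp [smul_eq_mul]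
    have e3 : ∑ i, v0 p i • Dx i F p
        = (∑ i, v0 p i * DxP i S0 (p, nd p.2 / ε))
          + v0 p (Fin.last n) * ε⁻¹ * DXP S0 (p, nd p.2 / ε) := by
      simp only [e2, smul_eq_mul, mul_add, Finset.sum_add_distrib]
      congr 1
      rw [Finset.sum_eq_single (Fin.last n)]
      · simp [mul_assoc]
      · intro b _ hb; simp [hb]
      · simp
    rw [Xd, e1, e3]
    have hv : v0 p (Fin.last n) = nd p.2 * w p := hwdef p hp
    have : nd p.2 * w p * ε⁻¹ * DXP S0 (p, nd p.2 / ε)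
        = w p * (nd p.2 / ε) * DXP S0 (p, nd p.2 / ε) := by
      rw [div_eq_mul_inv]; ring
    rw [hv]
    linarith [htr, this]
  rw [hFeq]
  constructor
  · intro p hp i
    rw [hburgers p hp i, (hgradp p hp).2 i]
    ring
  · intro p hp
    have h1 := (hgradp p hp).1
    have h2 := (hgradp p hp).2
    have hXd : Xd v0 p0 p = 0 := by
      rw [Xd, h1]
      simp [h2]
    rw [hXd, hdiv p hp]
    ring
  · intro p hp
    have hs0d : Differentiable ℝ s0 := hs0.1.differentiable (by simp)
    have hadd : fderiv ℝ (fun q => s0 q + F q) p = fderiv ℝ s0 p + fderiv ℝ F p :=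
      fderiv_add (hs0d p) (hFdiff p)
    have hXadd : Xd v0 (fun q => s0 q + F q) p = Xd v0 s0 p + Xd v0 F p := by
      simp only [Xd, Dt, Dx, hadd, ContinuousLinearMap.add_apply, smul_add,
        Finset.sum_add_distrib]
      ring
    rw [hXadd, hsol.entropy p hp, key p hp]
    ring
  · intro p hp
    exact hsol.wall p hp

end Paper
end
end
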